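/- The images of the monomials p₊^a p₋^b κ^c with a, b ∈ ℕ and 0 ≤ c ≤ p−1 form a ℂ-vector-space basis of U. (Equivalently, writing P± := p±^p, the monomials P₊^t P₋^s p₊^n p₋^m κ^k with t, s ∈ ℕ and 0 ≤ n, m, k ≤ p−1 form a basis of U_q(e(1,1)).) -/
import Mathlib


noncomputable section

/-- `q = exp(2πi/p)`, a primitive `p`-th root of unity. -/
def q (p : ℕ) : ℂ := Complex.exp (2 * Real.pi * Complex.I / p)

/-- Generators `p₊, p₋, κ, κ⁻¹` of `U_q(e(1,1))` at roots of unity. -/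
inductive UGen : Type
  | pp : UGen
  | pm : UGen
  | k : UGen
  | kinv : UGen

open FreeAlgebra in
/-- The defining relations of `U_q(e(1,1))` at `q^p = 1`: the two-sided ideal generated by
`p₊p₋ − p₋p₊`, `p₊κ − q⁻¹κp₊`, `p₋κ − qκp₋`, `κκ⁻¹ − 1`, `κ⁻¹κ − 1`, `κ^p − 1`. -/
inductive URel (p : ℕ) : FreeAlgebra ℂ UGen → FreeAlgebra ℂ UGen → Prop
  | commP : URel p (ι ℂ UGen.pp * ι ℂ UGen.pm) (ι ℂ UGen.pm * ι ℂ UGen.pp)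
  | ppK : URel p (ι ℂ UGen.pp * ι ℂ UGen.k) ((q p)⁻¹ • (ι ℂ UGen.k * ι ℂ UGen.pp))
  | pmK : URel p (ι ℂ UGen.pm * ι ℂ UGen.k) (q p • (ι ℂ UGen.k * ι ℂ UGen.pm))
  | kKinv : URel p (ι ℂ UGen.k * ι ℂ UGen.kinv) 1
  | kinvK : URel p (ι ℂ UGen.kinv * ι ℂ UGen.k) 1
  | kPow : URel p (ι ℂ UGen.k ^ p) 1

/-- The quantum algebra `U = U_q(e(1,1))` at roots of unity. -/
abbrev U (p : ℕ) : Type := RingQuot (URel p)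

/-- `p₊ ∈ U`. -/
def up (p : ℕ) : U p := RingQuot.mkAlgHom ℂ (URel p) (FreeAlgebra.ι ℂ UGen.pp)

/-- `p₋ ∈ U`. -/
def um (p : ℕ) : U p := RingQuot.mkAlgHom ℂ (URel p) (FreeAlgebra.ι ℂ UGen.pm)

/-- `κ ∈ U`. -/
def uk (p : ℕ) : U p := RingQuot.mkAlgHom ℂ (URel p) (FreeAlgebra.ι ℂ UGen.k)

/-- `κ⁻¹ ∈ U`. -/
def ukinv (p : ℕ) : U p := RingQuot.mkAlgHom ℂ (URel p) (FreeAlgebra.ι ℂ UGen.kinv)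

/-! ### Auxiliary lemmas -/

lemma q_ne_zero (p : ℕ) : q p ≠ 0 := Complex.exp_ne_zero _

lemma q_pow_p (p : ℕ) (hp0 : p ≠ 0) : q p ^ p = 1 := by
  rw [q, ← Complex.exp_nat_mul]
  have : (p : ℂ) ≠ 0 := Nat.cast_ne_zero.mpr hp0
  rw [mul_div_cancel₀ _ this]
  simpa using Complex.exp_two_pi_mul_I

section rels

variable (p : ℕ)

lemma rel_comm : up p * um p = um p * up p := by
  have := RingQuot.mkAlgHom_rel ℂ (URel.commP (p := p))
  simpa [map_mul, up, um] using this

lemma rel_ppK : up p * uk p = (q p)⁻¹ • (uk p * up p) := by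
  have := RingQuot.mkAlgHom_rel ℂ (URel.ppK (p := p))
  simpa [map_mul, map_smul, up, uk] using this

lemma rel_pmK : um p * uk p = q p • (uk p * um p) := by
  have := RingQuot.mkAlgHom_rel ℂ (URel.pmK (p := p))
  simpa [map_mul, map_smul, um, uk] using this

lemma rel_kKinv : uk p * ukinv p = 1 := by
  have := RingQuot.mkAlgHom_rel ℂ (URel.kKinv (p := p))
  simpa [map_mul, map_one, uk, ukinv] using this

lemma rel_kPow : uk p ^ p = 1 := by
  have := RingQuot.mkAlgHom_rel ℂ (URel.kPow (p := p))
  simpa [map_pow, map_one, uk] using this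

lemma uk_up : uk p * up p = q p • (up p * uk p) := by
  rw [rel_ppK, smul_smul, mul_inv_cancel₀ (q_ne_zero p), one_smul]

lemma uk_um : uk p * um p = (q p)⁻¹ • (um p * uk p) := by
  rw [rel_pmK, smul_smul, inv_mul_cancel₀ (q_ne_zero p), one_smul]

lemma ukinv_eq (hp0 : p ≠ 0) : ukinv p = uk p ^ (p - 1) := by
  have h : uk p ^ (p - 1) * (uk p * ukinv p) = uk p ^ (p - 1) := by
    rw [rel_kKinv, mul_one]
  calc ukinv p = uk p ^ p * ukinv p := by rw [rel_kPow, one_mul]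
    _ = uk p ^ (p - 1) * (uk p * ukinv p) := by
        rw [← mul_assoc, ← pow_succ, Nat.sub_add_cancel (Nat.one_le_iff_ne_zero.mpr hp0)]
    _ = uk p ^ (p - 1) := h

lemma uk_up_pow (a : ℕ) : uk p * up p ^ a = (q p ^ a) • (up p ^ a * uk p) := by
  induction a with
  | zero => simp
  | succ n ih =>
    rw [pow_succ, ← mul_assoc, ih, smul_mul_assoc, mul_assoc, uk_up, mul_smul_comm,
      smul_smul, ← pow_succ]
    ring_nf
    rw [mul_assoc]

lemma uk_um_pow (b : ℕ) : uk p * um p ^ b = ((q p)⁻¹ ^ b) • (um p ^ b * uk p) := by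
  induction b with
  | zero => simp
  | succ n ih =>
    rw [pow_succ, ← mul_assoc, ih, smul_mul_assoc, mul_assoc, uk_um, mul_smul_comm,
      smul_smul, ← pow_succ]
    ring_nf
    rw [mul_assoc]

lemma ukpow_up_pow (c a : ℕ) :
    uk p ^ c * up p ^ a = (q p ^ (c * a)) • (up p ^ a * uk p ^ c) := by
  induction c with
  | zero => simp
  | succ n ih =>
    rw [pow_succ, mul_assoc, uk_up_pow, mul_smul_comm, ← mul_assoc, ih, smul_mul_assoc,
      smul_smul, mul_assoc, ← pow_succ, ← pow_add]
    congr 2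
    ring

lemma ukpow_um_pow (c b : ℕ) :
    uk p ^ c * um p ^ b = ((q p)⁻¹ ^ (c * b)) • (um p ^ b * uk p ^ c) := by
  induction c with
  | zero => simp
  | succ n ih =>
    rw [pow_succ, mul_assoc, uk_um_pow, mul_smul_comm, ← mul_assoc, ih, smul_mul_assoc,
      smul_smul, mul_assoc, ← pow_succ, ← pow_add]
    congr 2
    ring

lemma um_up_comm : Commute (um p) (up p) := (rel_comm p).symm

/-- The monomial `p₊^a p₋^b κ^c`. -/
def mono (a b c : ℕ) : U p := up p ^ a * um p ^ b * uk p ^ c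

lemma mono_mul (a b c a' b' c' : ℕ) :
    mono p a b c * mono p a' b' c'
      = (q p ^ (c * a') * (q p)⁻¹ ^ (c * b')) • mono p (a + a') (b + b') (c + c') := by
  unfold mono
  have h3 : um p ^ b * up p ^ a' = up p ^ a' * um p ^ b :=
    ((um_up_comm p).pow_pow b a').eq
  calc up p ^ a * um p ^ b * uk p ^ c * (up p ^ a' * um p ^ b' * uk p ^ c')
      = up p ^ a * um p ^ b * ((uk p ^ c * up p ^ a') * (um p ^ b' * uk p ^ c')) := by
        simp only [mul_assoc]
    _ = (q p ^ (c * a')) • (up p ^ a * um p ^ b *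
          (up p ^ a' * ((uk p ^ c * um p ^ b') * uk p ^ c'))) := by
        rw [ukpow_up_pow]
        simp only [smul_mul_assoc, mul_smul_comm, mul_assoc]
    _ = (q p ^ (c * a') * (q p)⁻¹ ^ (c * b')) • (up p ^ a * um p ^ b *
          (up p ^ a' * (um p ^ b' * uk p ^ c * uk p ^ c'))) := by
        rw [ukpow_um_pow]
        simp only [smul_mul_assoc, mul_smul_comm, mul_assoc, smul_smul]
    _ = (q p ^ (c * a') * (q p)⁻¹ ^ (c * b')) •
          (up p ^ (a + a') * um p ^ (b + b') * uk p ^ (c + c')) := by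
        congr 1
        rw [pow_add, pow_add, pow_add]
        simp only [mul_assoc]
        rw [← mul_assoc (um p ^ b) (up p ^ a'), h3, mul_assoc]

lemma uk_pow_mod (hp0 : p ≠ 0) (n : ℕ) : uk p ^ n = uk p ^ (n % p) := by
  conv_lhs => rw [← Nat.div_add_mod n p]
  rw [pow_add, pow_mul, rel_kPow, one_pow, one_mul]

end rels

/-! ### The representation -/

section rep

variable (p : ℕ)

/-- The representation space. -/
abbrev V : Type := (ℕ × ℕ × ZMod p) →₀ ℂ

/-- the scalar `q^{a-b}` -/
def sc (a b : ℕ) : ℂ := q p ^ a * (q p ^ b)⁻¹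

lemma sc_ne_zero (a b : ℕ) : sc p a b ≠ 0 :=
  mul_ne_zero (pow_ne_zero _ (q_ne_zero p)) (inv_ne_zero (pow_ne_zero _ (q_ne_zero p)))

/-- action of p₊ -/
def Tp : Module.End ℂ (V p) :=
  Finsupp.lsum ℂ (fun m => Finsupp.lsingle (m.1 + 1, m.2.1, m.2.2))

/-- action of p₋ -/
def Tm : Module.End ℂ (V p) :=
  Finsupp.lsum ℂ (fun m => Finsupp.lsingle (m.1, m.2.1 + 1, m.2.2))

/-- action of κ -/
def Tk : Module.End ℂ (V p) :=
  Finsupp.lsum ℂ (fun m => sc p m.1 m.2.1 • Finsupp.lsingle (m.1, m.2.1, m.2.2 + 1))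

/-- action of κ⁻¹ -/
def Tkinv : Module.End ℂ (V p) :=
  Finsupp.lsum ℂ (fun m => (sc p m.1 m.2.1)⁻¹ • Finsupp.lsingle (m.1, m.2.1, m.2.2 - 1))

@[simp] lemma Tp_single (m : ℕ × ℕ × ZMod p) (r : ℂ) :
    Tp p (Finsupp.single m r) = Finsupp.single (m.1 + 1, m.2.1, m.2.2) r := by
  simp [Tp]

@[simp] lemma Tm_single (m : ℕ × ℕ × ZMod p) (r : ℂ) :
    Tm p (Finsupp.single m r) = Finsupp.single (m.1, m.2.1 + 1, m.2.2) r := by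
  simp [Tm]

@[simp] lemma Tk_single (m : ℕ × ℕ × ZMod p) (r : ℂ) :
    Tk p (Finsupp.single m r) = sc p m.1 m.2.1 • Finsupp.single (m.1, m.2.1, m.2.2 + 1) r := by
  simp [Tk]

@[simp] lemma Tkinv_single (m : ℕ × ℕ × ZMod p) (r : ℂ) :
    Tkinv p (Finsupp.single m r)
      = (sc p m.1 m.2.1)⁻¹ • Finsupp.single (m.1, m.2.1, m.2.2 - 1) r := by
  simp [Tkinv]

/-- the map on generators -/
def genMap : UGen → Module.End ℂ (V p)
  | UGen.pp => Tp p
  | UGen.pm => Tm p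
  | UGen.k => Tk p
  | UGen.kinv => Tkinv p

/-- the algebra map from the free algebra -/
def φ0 : FreeAlgebra ℂ UGen →ₐ[ℂ] Module.End ℂ (V p) := FreeAlgebra.lift ℂ (genMap p)

lemma Tk_pow (n : ℕ) (m : ℕ × ℕ × ZMod p) (r : ℂ) :
    (Tk p ^ n) (Finsupp.single m r)
      = (sc p m.1 m.2.1) ^ n • Finsupp.single (m.1, m.2.1, m.2.2 + n) r := by
  induction n with
  | zero => simp
  | succ n ih =>
    rw [pow_succ', Module.End.mul_apply, ih, map_smul, Tk_single, smul_smul]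
    have h1 : sc p m.1 m.2.1 ^ n * sc p m.1 m.2.1 = sc p m.1 m.2.1 ^ (n + 1) :=
      (pow_succ _ _).symm
    have h2 : m.2.2 + (n : ZMod p) + 1 = m.2.2 + ((n + 1 : ℕ) : ZMod p) := by
      push_cast; ring
    rw [h1, h2]

lemma Tp_pow (n : ℕ) (m : ℕ × ℕ × ZMod p) (r : ℂ) :
    (Tp p ^ n) (Finsupp.single m r) = Finsupp.single (m.1 + n, m.2.1, m.2.2) r := by
  induction n with
  | zero => simp
  | succ n ih =>
    rw [pow_succ', Module.End.mul_apply, ih, Tp_single]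
    have : m.1 + n + 1 = m.1 + (n + 1) := by omega
    rw [this]

lemma Tm_pow (n : ℕ) (m : ℕ × ℕ × ZMod p) (r : ℂ) :
    (Tm p ^ n) (Finsupp.single m r) = Finsupp.single (m.1, m.2.1 + n, m.2.2) r := by
  induction n with
  | zero => simp
  | succ n ih =>
    rw [pow_succ', Module.End.mul_apply, ih, Tm_single]
    have : m.2.1 + n + 1 = m.2.1 + (n + 1) := by omega
    rw [this]

lemma rel_holds (hp0 : p ≠ 0) : ∀ ⦃x y⦄, URel p x y → φ0 p x = φ0 p y := by
  intro x y h
  have hq := q_ne_zero p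
  induction h with
  | commP =>
    simp only [map_mul, φ0, FreeAlgebra.lift_ι_apply, genMap]
    apply Finsupp.lhom_ext
    intro m r
    simp [Module.End.mul_apply]
  | ppK =>
    simp only [map_mul, map_smul, φ0, FreeAlgebra.lift_ι_apply, genMap]
    apply Finsupp.lhom_ext
    intro m r
    simp only [Module.End.mul_apply, Tp_single, Tk_single, map_smul,
      LinearMap.smul_apply, smul_smul]
    congr 1
    simp only [sc, pow_succ]
    field_simp
  | pmK =>
    simp only [map_mul, map_smul, φ0, FreeAlgebra.lift_ι_apply, genMap]
    apply Finsupp.lhom_ext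
    intro m r
    simp only [Module.End.mul_apply, Tm_single, Tk_single, map_smul,
      LinearMap.smul_apply, smul_smul]
    congr 1
    simp only [sc, pow_succ]
    field_simp
  | kKinv =>
    simp only [map_mul, map_one, φ0, FreeAlgebra.lift_ι_apply, genMap]
    apply Finsupp.lhom_ext
    intro m r
    simp only [Module.End.mul_apply, Tkinv_single, Tk_single, map_smul, smul_smul,
      Module.End.one_apply]
    have h2 : m.2.2 - 1 + 1 = m.2.2 := by ring
    rw [h2, inv_mul_cancel₀ (sc_ne_zero p _ _), one_smul]
  | kinvK =>
    simp only [map_mul, map_one, φ0, FreeAlgebra.lift_ι_apply, genMap]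
    apply Finsupp.lhom_ext
    intro m r
    simp only [Module.End.mul_apply, Tkinv_single, Tk_single, map_smul, smul_smul,
      Module.End.one_apply]
    have h2 : m.2.2 + 1 - 1 = m.2.2 := by ring
    rw [h2, mul_inv_cancel₀ (sc_ne_zero p _ _), one_smul]
  | kPow =>
    simp only [map_pow, map_one, φ0, FreeAlgebra.lift_ι_apply, genMap]
    apply Finsupp.lhom_ext
    intro m r
    rw [Tk_pow, Module.End.one_apply]
    have h1 : (sc p m.1 m.2.1) ^ p = 1 := by
      have hq1 : (q p ^ m.1) ^ p = 1 := by
        rw [← pow_mul, mul_comm, pow_mul, q_pow_p p hp0, one_pow]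
      have hq2 : (q p ^ m.2.1) ^ p = 1 := by
        rw [← pow_mul, mul_comm, pow_mul, q_pow_p p hp0, one_pow]
      rw [sc, mul_pow, hq1, one_mul, inv_pow, hq2, inv_one]
    have h2 : m.2.2 + (p : ZMod p) = m.2.2 := by
      rw [ZMod.natCast_self, add_zero]
    rw [h1, h2, one_smul]

/-- the representation of U -/
def φ (hp0 : p ≠ 0) : U p →ₐ[ℂ] Module.End ℂ (V p) :=
  RingQuot.liftAlgHom ℂ ⟨φ0 p, rel_holds p hp0⟩

lemma φ_up (hp0 : p ≠ 0) : φ p hp0 (up p) = Tp p := by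
  rw [up, φ, RingQuot.liftAlgHom_mkAlgHom_apply, φ0, FreeAlgebra.lift_ι_apply]; rfl

lemma φ_um (hp0 : p ≠ 0) : φ p hp0 (um p) = Tm p := by
  rw [um, φ, RingQuot.liftAlgHom_mkAlgHom_apply, φ0, FreeAlgebra.lift_ι_apply]; rfl

lemma φ_uk (hp0 : p ≠ 0) : φ p hp0 (uk p) = Tk p := by
  rw [uk, φ, RingQuot.liftAlgHom_mkAlgHom_apply, φ0, FreeAlgebra.lift_ι_apply]; rfl

end rep

/-! ### The theorem -/

/-- The monomials `p₊^a p₋^b κ^c` with `a, b ∈ ℕ` and `0 ≤ c ≤ p−1`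
form a `ℂ`-vector-space basis of `U_q(e(1,1))` at roots of unity. -/
theorem statement16 (p : ℕ) (hp : Odd p) (hp3 : 3 ≤ p) :
    LinearIndependent ℂ
      (fun x : ℕ × ℕ × Fin p => up p ^ x.1 * um p ^ x.2.1 * uk p ^ (x.2.2 : ℕ)) ∧
    Submodule.span ℂ
      (Set.range (fun x : ℕ × ℕ × Fin p =>
        up p ^ x.1 * um p ^ x.2.1 * uk p ^ (x.2.2 : ℕ))) = ⊤ := by
  have hp0 : p ≠ 0 := by omega
  have hppos : 0 < p := by omega
  haveI : NeZero p := ⟨hp0⟩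
  constructor
  · -- linear independence
    let L : U p →ₗ[ℂ] V p :=
      { toFun := fun u => (φ p hp0 u) (Finsupp.single ((0 : ℕ), (0 : ℕ), (0 : ZMod p)) (1 : ℂ))
        map_add' := fun u v => by simp [map_add]
        map_smul' := fun r u => by simp [map_smul] }
    apply LinearIndependent.of_comp L
    have key : (⇑L ∘ fun x : ℕ × ℕ × Fin p =>
        up p ^ x.1 * um p ^ x.2.1 * uk p ^ (x.2.2 : ℕ))
        = fun x : ℕ × ℕ × Fin p =>
          Finsupp.single (x.1, x.2.1, ((x.2.2 : ℕ) : ZMod p)) (1 : ℂ) := by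
      funext x
      have hφ : (φ p hp0) (up p ^ x.1 * um p ^ x.2.1 * uk p ^ (x.2.2 : ℕ))
          = Tp p ^ x.1 * Tm p ^ x.2.1 * Tk p ^ (x.2.2 : ℕ) := by
        rw [map_mul, map_mul, map_pow, map_pow, map_pow, φ_up, φ_um, φ_uk]
      show (φ p hp0) (up p ^ x.1 * um p ^ x.2.1 * uk p ^ (x.2.2 : ℕ))
          (Finsupp.single ((0 : ℕ), (0 : ℕ), (0 : ZMod p)) (1 : ℂ)) = _
      rw [hφ, Module.End.mul_apply, Module.End.mul_apply, Tk_pow]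
      have hsc : sc p 0 0 = 1 := by simp [sc]
      rw [hsc, one_pow, one_smul, Tm_pow, Tp_pow]
      simp
    rw [key]
    have hinj : Function.Injective (fun x : ℕ × ℕ × Fin p =>
        (x.1, x.2.1, ((x.2.2 : ℕ) : ZMod p))) := by
      intro x y hxy
      simp only [Prod.mk.injEq] at hxy
      obtain ⟨h1, h2, h3⟩ := hxy
      have : (x.2.2 : ℕ) = (y.2.2 : ℕ) := by
        have hx := ZMod.val_natCast_of_lt x.2.2.isLt
        have hy := ZMod.val_natCast_of_lt y.2.2.isLt
        rw [← hx, ← hy, h3]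
      exact Prod.ext h1 (Prod.ext h2 (Fin.ext this))
    have hli := (Finsupp.basisSingleOne (R := ℂ) (ι := ℕ × ℕ × ZMod p)).linearIndependent
    have hli2 := hli.comp _ hinj
    have : (⇑(Finsupp.basisSingleOne (R := ℂ) (ι := ℕ × ℕ × ZMod p)) ∘
        fun x : ℕ × ℕ × Fin p => (x.1, x.2.1, ((x.2.2 : ℕ) : ZMod p)))
        = fun x : ℕ × ℕ × Fin p =>
          Finsupp.single (x.1, x.2.1, ((x.2.2 : ℕ) : ZMod p)) (1 : ℂ) := by
      funext x
      simp [Finsupp.coe_basisSingleOne]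
    rwa [this] at hli2
  · -- spanning
    set S := Submodule.span ℂ (Set.range (fun x : ℕ × ℕ × Fin p =>
        up p ^ x.1 * um p ^ x.2.1 * uk p ^ (x.2.2 : ℕ))) with hS
    have hmono_mem : ∀ a b c : ℕ, mono p a b c ∈ S := by
      intro a b c
      have hc : c % p < p := Nat.mod_lt _ hppos
      have : mono p a b c = up p ^ a * um p ^ b * uk p ^ ((⟨c % p, hc⟩ : Fin p) : ℕ) := by
        rw [mono, uk_pow_mod p hp0 c]
      rw [this]
      exact Submodule.subset_span ⟨(a, b, ⟨c % p, hc⟩), rfl⟩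
    have hone : (1 : U p) ∈ S := by
      have : (1 : U p) = mono p 0 0 0 := by simp [mono]
      rw [this]; exact hmono_mem 0 0 0
    have hmul : ∀ x ∈ S, ∀ y ∈ S, x * y ∈ S := by
      intro x hx y hy
      induction hx using Submodule.span_induction with
      | mem u hu =>
        obtain ⟨⟨a, b, c⟩, rfl⟩ := hu
        induction hy using Submodule.span_induction with
        | mem v hv =>
          obtain ⟨⟨a', b', c'⟩, rfl⟩ := hv
          have h := mono_mul p a b (c : ℕ) a' b' (c' : ℕ)
          simp only [mono] at h
          rw [h]
          exact Submodule.smul_mem _ _ (hmono_mem _ _ _)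
        | zero => simpa using Submodule.zero_mem S
        | add v w _ _ hv hw => rw [mul_add]; exact Submodule.add_mem _ hv hw
        | smul r v _ hv => rw [mul_smul_comm]; exact Submodule.smul_mem _ _ hv
      | zero => simpa using Submodule.zero_mem S
      | add u v _ _ hu hv => rw [add_mul]; exact Submodule.add_mem _ hu hv
      | smul r u _ hu => rw [smul_mul_assoc]; exact Submodule.smul_mem _ _ hu
    rw [Submodule.eq_top_iff']
    intro u
    obtain ⟨w, rfl⟩ := RingQuot.mkAlgHom_surjective ℂ (URel p) u
    induction w using FreeAlgebra.induction with
    | grade0 r =>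
      rw [AlgHom.commutes]
      have : (algebraMap ℂ (U p)) r = r • (1 : U p) := Algebra.algebraMap_eq_smul_one r
      rw [this]
      exact Submodule.smul_mem _ _ hone
    | grade1 g =>
      cases g with
      | pp =>
        have : RingQuot.mkAlgHom ℂ (URel p) (FreeAlgebra.ι ℂ UGen.pp) = mono p 1 0 0 := by
          simp [mono, up]
        rw [this]; exact hmono_mem 1 0 0
      | pm =>
        have : RingQuot.mkAlgHom ℂ (URel p) (FreeAlgebra.ι ℂ UGen.pm) = mono p 0 1 0 := by
          simp [mono, um]
        rw [this]; exact hmono_mem 0 1 0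
      | k =>
        have : RingQuot.mkAlgHom ℂ (URel p) (FreeAlgebra.ι ℂ UGen.k) = mono p 0 0 1 := by
          simp [mono, uk]
        rw [this]; exact hmono_mem 0 0 1
      | kinv =>
        have : RingQuot.mkAlgHom ℂ (URel p) (FreeAlgebra.ι ℂ UGen.kinv)
            = mono p 0 0 (p - 1) := by
          simp only [mono, pow_zero, one_mul]
          exact (ukinv_eq p hp0)
        rw [this]; exact hmono_mem 0 0 (p - 1)
    | mul a b ha hb =>
      rw [map_mul]
      exact hmul _ ha _ hb
    | add a b ha hb =>
      rw [map_add]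
      exact Submodule.add_mem _ ha hb
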